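/- arXiv:2209.04125 — 2 statements merged into one kernel-verified Lean document; each statement's English description precedes it below -/
import Mathlib

section
/- Let (A, ≤_A, ≺_A) and (B, ≤_B, ≺_B) be normal abstract bases with associated continuous spaces (A, τ_A) and (B, τ_B) (where τ_A has base {↟a : a ∈ A} with ↟a = {b : a ≺_A b}, and similarly for τ_B). Then a map f : A → B is a normal map if and only if f is continuous from (A, τ_A) to (B, τ_B) and way-below preserving (a ≺_A a′ implies f(a) ≺_B f(a′)). -/
open Set

section Defs

variable {X : Type*} [TopologicalSpace X]

/-- Specialization order: `x ⊑ y` iff `x ∈ closure {y}`. -/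
def SOrd (x y : X) : Prop := x ∈ closure ({y} : Set X)

/-- `D` is a directed subset (w.r.t. the specialization order). -/
def IsDirSub (D : Set X) : Prop :=
  D.Nonempty ∧ ∀ a ∈ D, ∀ b ∈ D, ∃ c ∈ D, SOrd a c ∧ SOrd b c

/-- `D` converges to `x`: every open neighbourhood of `x` meets `D`. -/
def ConvTo (D : Set X) (x : X) : Prop :=
  ∀ U : Set X, IsOpen U → x ∈ U → (D ∩ U).Nonempty

/-- `U` is directed-open. -/
def DirOpen (U : Set X) : Prop :=
  ∀ (D : Set X) (x : X), IsDirSub D → ConvTo D x → x ∈ U → (D ∩ U).Nonempty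

/-- `x ≪ y` : `x` d-approximates `y`. -/
def WayBelow (x y : X) : Prop :=
  ∀ D : Set X, IsDirSub D → ConvTo D y → ∃ d ∈ D, SOrd x d

/-- `↓x` w.r.t. the specialization order. -/
def dnSet (x : X) : Set X := {z | SOrd z x}

/-- `↑x` w.r.t. the specialization order. -/
def upSet (x : X) : Set X := {z | SOrd x z}

/-- `⇓y = {x | x ≪ y}`. -/
def wbSet (y : X) : Set X := {x | WayBelow x y}

/-- `x` is the least upper bound of `D` w.r.t. the specialization order. -/
def IsSupOf (x : X) (D : Set X) : Prop :=
  (∀ d ∈ D, SOrd d x) ∧ ∀ y : X, (∀ d ∈ D, SOrd d y) → SOrd x y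

/-- A topological ideal: a directed lower set having a supremum and converging to it. -/
def IsTopIdeal (A : Set X) : Prop :=
  IsDirSub A ∧ (∀ a ∈ A, ∀ z : X, SOrd z a → z ∈ A) ∧
    ∃ s : X, IsSupOf s A ∧ ConvTo A s

end Defs

/-- The set of d-compact elements of `X`. -/
def KSet (X : Type*) [TopologicalSpace X] : Set X := {x | WayBelow x x}

/-- A directed space: a T0 space in which every directed-open set is open. -/
def IsDirectedSpace (X : Type*) [TopologicalSpace X] : Prop :=
  T0Space X ∧ ∀ U : Set X, DirOpen U → IsOpen U

/-- An algebraic space. -/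
def IsAlgebraicSpace (X : Type*) [TopologicalSpace X] : Prop :=
  IsDirectedSpace X ∧
    ∀ x : X, IsDirSub (dnSet x ∩ KSet X) ∧ ConvTo (dnSet x ∩ KSet X) x

/-- A continuous space. -/
def IsContinuousSpace (X : Type*) [TopologicalSpace X] : Prop :=
  IsDirectedSpace X ∧ ∀ x : X, ∃ D ⊆ wbSet x, IsDirSub D ∧ ConvTo D x

/-- A b-space. -/
def IsBSpace (X : Type*) [TopologicalSpace X] : Prop :=
  ∀ U : Set X, IsOpen U → ∀ x ∈ U,
    ∃ y : X, x ∈ interior (upSet y) ∧ interior (upSet y) = upSet y ∧ upSet y ⊆ U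

/-- `B` is a basis of the directed space `X`. -/
def IsBasisOf (X : Type*) [TopologicalSpace X] (B : Set X) : Prop :=
  ∀ x : X, IsDirSub (wbSet x ∩ B) ∧ ConvTo (wbSet x ∩ B) x

/-- The set of topological ideals of `X`. -/
def TopIdeal (X : Type*) [TopologicalSpace X] : Type _ := {A : Set X // IsTopIdeal A}

/-- Membership in the topology `Ω(I_T(X))`. -/
def OmegaOpen {X : Type*} [TopologicalSpace X] (𝒰 : Set (TopIdeal X)) : Prop :=
  ∀ A : TopIdeal X, A ∈ 𝒰 ↔
    ∃ B : TopIdeal X, (∃ x : X, B.1 = dnSet x) ∧ B ∈ 𝒰 ∧ B.1 ⊆ A.1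

theorem sOrd_refl {X : Type*} [TopologicalSpace X] (x : X) : SOrd x x :=
  subset_closure rfl

theorem sOrd_trans {X : Type*} [TopologicalSpace X] {x y z : X}
    (h1 : SOrd x y) (h2 : SOrd y z) : SOrd x z :=
  (closure_minimal (Set.singleton_subset_iff.mpr h2) isClosed_closure) h1

theorem principal_isTopIdeal {X : Type*} [TopologicalSpace X] (x : X) :
    IsTopIdeal (dnSet x) := by
  refine ⟨⟨⟨x, sOrd_refl x⟩, ?_⟩, ?_, x, ⟨?_, ?_⟩, ?_⟩
  · intro a ha b hb
    exact ⟨x, sOrd_refl x, ha, hb⟩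
  · intro a ha z hz
    exact sOrd_trans hz ha
  · intro d hd; exact hd
  · intro y hy; exact hy x (sOrd_refl x)
  · intro U _ hxU
    exact ⟨x, sOrd_refl x, hxU⟩

/-- The topology `Ω(I_T(X))` on the set of topological ideals. -/
def OmegaTop (X : Type*) [TopologicalSpace X] : TopologicalSpace (TopIdeal X) where
  IsOpen := OmegaOpen
  isOpen_univ := by
    intro A
    constructor
    · intro _
      obtain ⟨⟨a, ha⟩, -⟩ := A.2.1
      refine ⟨⟨dnSet a, principal_isTopIdeal a⟩, ⟨a, rfl⟩, trivial, ?_⟩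
      intro z hz
      exact A.2.2.1 a ha z hz
    · intro _
      trivial
  isOpen_inter := by
    intro 𝒰 𝒱 h𝒰 h𝒱 A
    constructor
    · rintro ⟨hAU, hAV⟩
      obtain ⟨B1, ⟨x, hx⟩, hB1U, hB1A⟩ := (h𝒰 A).mp hAU
      obtain ⟨B2, ⟨y, hy⟩, hB2V, hB2A⟩ := (h𝒱 A).mp hAV
      have hxA : x ∈ A.1 := hB1A (by rw [hx]; exact sOrd_refl x)
      have hyA : y ∈ A.1 := hB2A (by rw [hy]; exact sOrd_refl y)
      obtain ⟨c, hcA, hxc, hyc⟩ := A.2.1.2 x hxA y hyA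
      have hsubU : B1.1 ⊆ dnSet c := by
        rw [hx]; intro z hz; exact sOrd_trans hz hxc
      have hsubV : B2.1 ⊆ dnSet c := by
        rw [hy]; intro z hz; exact sOrd_trans hz hyc
      have hcU : (⟨dnSet c, principal_isTopIdeal c⟩ : TopIdeal X) ∈ 𝒰 :=
        (h𝒰 _).mpr ⟨B1, ⟨x, hx⟩, hB1U, hsubU⟩
      have hcV : (⟨dnSet c, principal_isTopIdeal c⟩ : TopIdeal X) ∈ 𝒱 :=
        (h𝒱 _).mpr ⟨B2, ⟨y, hy⟩, hB2V, hsubV⟩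
      exact ⟨⟨dnSet c, principal_isTopIdeal c⟩, ⟨c, rfl⟩, ⟨hcU, hcV⟩,
        fun z hz => A.2.2.1 c hcA z hz⟩
    · rintro ⟨B, hBp, ⟨hBU, hBV⟩, hBA⟩
      exact ⟨(h𝒰 A).mpr ⟨B, hBp, hBU, hBA⟩, (h𝒱 A).mpr ⟨B, hBp, hBV, hBA⟩⟩
  isOpen_sUnion := by
    intro S hS A
    constructor
    · rintro ⟨𝒰, h𝒰S, hA𝒰⟩
      obtain ⟨B, hBp, hB𝒰, hBA⟩ := (hS 𝒰 h𝒰S A).mp hA𝒰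
      exact ⟨B, hBp, ⟨𝒰, h𝒰S, hB𝒰⟩, hBA⟩
    · rintro ⟨B, hBp, ⟨𝒰, h𝒰S, hB𝒰⟩, hBA⟩
      exact ⟨𝒰, h𝒰S, (hS 𝒰 h𝒰S A).mpr ⟨B, hBp, hB𝒰, hBA⟩⟩

instance (X : Type*) [TopologicalSpace X] : TopologicalSpace (TopIdeal X) :=
  OmegaTop X

/-- A normal abstract basis on a poset. -/
structure NormalAbstractBasis (A : Type*) [PartialOrder A] (prec : A → A → Prop) :
    Prop where
  prec_trans : ∀ a b c : A, prec a b → prec b c → prec a c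
  interpolation : ∀ (M : Finset A) (z : A), (∀ m ∈ M, prec m z) →
    ∃ y : A, (∀ m ∈ M, prec m y) ∧ prec y z
  prec_le : ∀ a b : A, prec a b → a ≤ b
  le_prec_le : ∀ a b c d : A, a ≤ b → prec b c → c ≤ d → prec a d
  sep : ∀ a b : A, ¬ a ≤ b → ∃ c : A, prec c a ∧ ¬ prec c b

/-- A normal map between normal abstract bases. -/
def IsNormalMap {A B : Type*} [PartialOrder A] [PartialOrder B]
    (precA : A → A → Prop) (precB : B → B → Prop) (f : A → B) : Prop :=
  Monotone f ∧ (∀ a a' : A, precA a a' → precB (f a) (f a')) ∧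
    ∀ (x : A) (y : B), precB y (f x) → ∃ z : A, precA z x ∧ precB y (f z)

section Aux

variable {A : Type*} [PartialOrder A] {prec : A → A → Prop}

/-- The generated topology. -/
def genTop (prec : A → A → Prop) : TopologicalSpace A :=
  TopologicalSpace.generateFrom {S : Set A | ∃ a : A, S = {b : A | prec a b}}

lemma nab_isOpen_of {S : Set A}
    (hS : ∀ x ∈ S, ∃ z, prec z x ∧ {b | prec z b} ⊆ S) :
    (genTop prec).IsOpen S := by
  have : S = ⋃₀ {U | (∃ a, U = {b | prec a b}) ∧ U ⊆ S} := by
    ext x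
    constructor
    · intro hx
      obtain ⟨z, hzx, hzS⟩ := hS x hx
      exact ⟨{b | prec z b}, ⟨⟨z, rfl⟩, hzS⟩, hzx⟩
    · rintro ⟨U, ⟨-, hUS⟩, hxU⟩
      exact hUS hxU
  rw [this]
  exact TopologicalSpace.GenerateOpen.sUnion _
    (fun U hU => TopologicalSpace.GenerateOpen.basic U hU.1)

lemma nab_open_upper (h : NormalAbstractBasis A prec) {U : Set A} (hU : (genTop prec).IsOpen U) :
    ∀ x ∈ U, ∀ x', x ≤ x' → x' ∈ U := by
  induction hU with
  | basic V hV =>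
      obtain ⟨a, rfl⟩ := hV
      exact fun x hx x' hxx' => h.le_prec_le a a x x' le_rfl hx hxx'
  | univ => exact fun x _ x' _ => trivial
  | inter V W _ _ ihV ihW =>
      exact fun x hx x' hxx' => ⟨ihV x hx.1 x' hxx', ihW x hx.2 x' hxx'⟩
  | sUnion S _ ih =>
      rintro x ⟨V, hVS, hxV⟩ x' hxx'
      exact ⟨V, hVS, ih V hVS x hxV x' hxx'⟩

lemma nab_mem_open_basic (h : NormalAbstractBasis A prec) {U : Set A} (hU : (genTop prec).IsOpen U) :
    ∀ x ∈ U, ∃ z, prec z x ∧ {b | prec z b} ⊆ U := by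
  classical
  induction hU with
  | basic V hV =>
      obtain ⟨a, rfl⟩ := hV
      intro x hx
      obtain ⟨y, hy, hyx⟩ := h.interpolation {a} x (by simpa using hx)
      exact ⟨y, hyx, fun b hb => h.prec_trans a y b (by simpa using hy) hb⟩
  | univ =>
      intro x _
      obtain ⟨y, -, hyx⟩ := h.interpolation ∅ x (by simp)
      exact ⟨y, hyx, fun _ _ => trivial⟩
  | inter V W _ _ ihV ihW =>
      intro x hx
      obtain ⟨z1, hz1, hz1V⟩ := ihV x hx.1
      obtain ⟨z2, hz2, hz2W⟩ := ihW x hx.2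
      obtain ⟨y, hy, hyx⟩ := h.interpolation {z1, z2} x (by
        intro m hm
        rcases Finset.mem_insert.mp hm with rfl | hm
        · exact hz1
        · rw [Finset.mem_singleton.mp hm]; exact hz2)
      refine ⟨y, hyx, fun b hb => ⟨?_, ?_⟩⟩
      · exact hz1V (h.prec_trans z1 y b (hy z1 (by simp)) hb)
      · exact hz2W (h.prec_trans z2 y b (hy z2 (by simp)) hb)
  | sUnion S _ ih =>
      rintro x ⟨V, hVS, hxV⟩
      obtain ⟨z, hz, hzV⟩ := ih V hVS x hxV
      exact ⟨z, hz, fun b hb => ⟨V, hVS, hzV hb⟩⟩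

lemma nab_le_of_forall (h : NormalAbstractBasis A prec) {x x' : A}
    (hx : ∀ a, prec a x → prec a x') : x ≤ x' := by
  by_contra hle
  obtain ⟨c, hcx, hcx'⟩ := h.sep x x' hle
  exact hcx' (hx c hcx)

end Aux

/-- a map between normal abstract bases is a normal map iff it is
continuous (for the associated topologies) and way-below preserving. -/
theorem normal_map_iff_continuous_wayBelow_preserving {A B : Type*}
    [PartialOrder A] [PartialOrder B]
    (precA : A → A → Prop) (precB : B → B → Prop)
    (hA : NormalAbstractBasis A precA) (hB : NormalAbstractBasis B precB) (f : A → B) :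
    letI tA : TopologicalSpace A :=
      TopologicalSpace.generateFrom {S : Set A | ∃ a : A, S = {b : A | precA a b}}
    letI tB : TopologicalSpace B :=
      TopologicalSpace.generateFrom {S : Set B | ∃ a : B, S = {b : B | precB a b}}
    IsNormalMap precA precB f ↔
      (Continuous f ∧ ∀ a a' : A, precA a a' → precB (f a) (f a')) := by
  show IsNormalMap precA precB f ↔
    (@Continuous A B (genTop precA) (genTop precB) f ∧
      ∀ a a' : A, precA a a' → precB (f a) (f a'))
  constructor
  · rintro ⟨hmono, hprec, happrox⟩
    refine ⟨?_, hprec⟩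
    rw [@continuous_def A B (genTop precA) (genTop precB)]
    intro U hU
    have hU' : TopologicalSpace.GenerateOpen
        {S : Set B | ∃ a : B, S = {b : B | precB a b}} U := hU
    clear hU
    induction hU' with
    | basic V hV =>
        obtain ⟨y, rfl⟩ := hV
        apply nab_isOpen_of (prec := precA)
        intro x hx
        obtain ⟨z, hzx, hyfz⟩ := happrox x y hx
        refine ⟨z, hzx, fun b hb => ?_⟩
        exact hB.le_prec_le y y (f z) (f b) le_rfl hyfz (hmono (hA.prec_le z b hb))
    | univ => exact (genTop precA).isOpen_univ
    | inter V W _ _ ihV ihW => exact (genTop precA).isOpen_inter _ _ ihV ihW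
    | sUnion S _ ih =>
        have : f ⁻¹' ⋃₀ S = ⋃₀ ((fun V => f ⁻¹' V) '' S) := by
          rw [Set.sUnion_image, Set.preimage_sUnion]
        rw [this]
        refine (genTop precA).isOpen_sUnion _ ?_
        rintro t ⟨V, hVS, rfl⟩
        exact ih V hVS
  · rintro ⟨hcont, hprec⟩
    have hmono : Monotone f := by
      intro x x' hxx'
      apply nab_le_of_forall hB
      intro c hc
      have hUopen : (genTop precA).IsOpen (f ⁻¹' {b | precB c b}) :=
        (@continuous_def A B (genTop precA) (genTop precB) f).mp hcont _
          (TopologicalSpace.GenerateOpen.basic _ ⟨c, rfl⟩)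
      exact nab_open_upper hA hUopen x hc x' hxx'
    refine ⟨hmono, hprec, ?_⟩
    intro x y hy
    have hUopen : (genTop precA).IsOpen (f ⁻¹' {b | precB y b}) :=
      (@continuous_def A B (genTop precA) (genTop precB) f).mp hcont _
        (TopologicalSpace.GenerateOpen.basic _ ⟨y, rfl⟩)
    obtain ⟨z, hzx, hzU⟩ := nab_mem_open_basic hA hUopen x hy
    obtain ⟨z', hz', hz'x⟩ := hA.interpolation {z} x (by simpa using hzx)
    exact ⟨z', hz'x, hzU (hz' z (by simp))⟩
end

section
/- Let N⊤ = ℕ ∪ {⊤} be the flat domain (partial order: x ≤ y iff x = y or y = ⊤), endowed with the upper topology (the topology generated by the complements of the sets ↓a for a ∈ N⊤). Then every element x ∈ N⊤ is d-compact (x ≪ x), yet N⊤ with this topology is not a directed space: the set {⊤} is directed-open but not open. -/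
open Set

section Flat

/-- The upper topology on the flat domain `ℕ⊤`. -/
def flatTop : TopologicalSpace (Option ℕ) :=
  TopologicalSpace.generateFrom
    {S : Set (Option ℕ) | ∃ a : Option ℕ, S = {z : Option ℕ | z = a ∨ a = none}ᶜ}

/-- Structure of open sets: empty, or contains `none` and is cofinite on the `some`s. -/
theorem flatTop_open_struct {U : Set (Option ℕ)} (hU : flatTop.IsOpen U) :
    U = ∅ ∨ (none ∈ U ∧ {n : ℕ | some n ∉ U}.Finite) := by
  have hU' : TopologicalSpace.GenerateOpen
      {S : Set (Option ℕ) | ∃ a : Option ℕ, S = {z : Option ℕ | z = a ∨ a = none}ᶜ} U := hU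
  clear hU
  induction hU' with
  | basic S hS =>
    obtain ⟨a, rfl⟩ := hS
    cases a with
    | none =>
      left
      ext z; simp
    | some m =>
      right
      constructor
      · simp
      · apply Set.Finite.subset (Set.finite_singleton m)
        intro n hn
        simp only [Set.mem_setOf_eq, Set.mem_compl_iff, not_not] at hn
        rcases hn with h | h
        · exact Option.some_injective _ h
        · exact absurd h (by simp)
  | univ =>
    right
    exact ⟨trivial, by simp⟩
  | inter U V _ _ ihU ihV =>
    rcases ihU with rfl | ⟨hnU, hfU⟩
    · left; simp
    rcases ihV with rfl | ⟨hnV, hfV⟩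
    · left; simp
    right
    refine ⟨⟨hnU, hnV⟩, Set.Finite.subset (hfU.union hfV) ?_⟩
    intro n hn
    simp only [Set.mem_setOf_eq, Set.mem_inter_iff, not_and_or, Set.mem_union] at hn ⊢
    exact hn
  | sUnion S _ ih =>
    by_cases h : ∃ T ∈ S, T ≠ ∅
    · obtain ⟨T, hTS, hTne⟩ := h
      rcases ih T hTS with rfl | ⟨hnT, hfT⟩
      · exact absurd rfl hTne
      right
      refine ⟨⟨T, hTS, hnT⟩, Set.Finite.subset hfT ?_⟩
      intro n hn
      simp only [Set.mem_setOf_eq] at hn ⊢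
      exact fun hsn => hn ⟨T, hTS, hsn⟩
    · push_neg at h
      left
      ext z
      simp only [Set.mem_sUnion, Set.mem_empty_iff_false, iff_false, not_exists]
      rintro T ⟨hTS, hz⟩
      rw [h T hTS] at hz
      exact hz

theorem flatTop_none_mem {U : Set (Option ℕ)} (hU : flatTop.IsOpen U)
    (hne : U.Nonempty) : none ∈ U := by
  rcases flatTop_open_struct hU with rfl | ⟨h, -⟩
  · exact absurd hne (by simp)
  · exact h

theorem flatTop_sOrd_none (x : Option ℕ) : @SOrd _ flatTop x none := by
  letI := flatTop
  show x ∈ closure {none}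
  rw [mem_closure_iff]
  intro U hU hxU
  exact ⟨none, flatTop_none_mem hU ⟨x, hxU⟩, rfl⟩

theorem flatTop_compl_some_open (m : ℕ) :
    flatTop.IsOpen ({some m}ᶜ : Set (Option ℕ)) := by
  have h : ({some m}ᶜ : Set (Option ℕ)) =
      {z : Option ℕ | z = some m ∨ (some m : Option ℕ) = none}ᶜ := by
    ext z; simp
  rw [h]
  exact TopologicalSpace.GenerateOpen.basic _ ⟨some m, rfl⟩

theorem flatTop_sOrd_some {x : Option ℕ} {m : ℕ} (h : @SOrd _ flatTop x (some m)) :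
    x = some m := by
  letI := flatTop
  by_contra hne
  have h' : x ∈ closure {some m} := h
  rw [mem_closure_iff] at h'
  obtain ⟨z, hz1, hz2⟩ := h' ({some m}ᶜ) (flatTop_compl_some_open m) hne
  exact hz1 hz2

/-- If a directed subset (w.r.t. the flat topology) does not contain `none`,
it is a singleton. -/
theorem flatTop_dir_sing {D : Set (Option ℕ)} (hD : @IsDirSub _ flatTop D)
    (hn : none ∉ D) : ∀ a ∈ D, ∀ b ∈ D, a = b := by
  intro a ha b hb
  obtain ⟨c, hc, hac, hbc⟩ := hD.2 a ha b hb
  cases c with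
  | none => exact absurd hc hn
  | some m =>
    rw [flatTop_sOrd_some hac, flatTop_sOrd_some hbc]

theorem flatTop_wayBelow (x : Option ℕ) : @WayBelow _ flatTop x x := by
  intro D hD hconv
  by_cases hn : none ∈ D
  · exact ⟨none, hn, flatTop_sOrd_none x⟩
  obtain ⟨d0, hd0⟩ := hD.1
  refine ⟨d0, hd0, ?_⟩
  cases hd : d0 with
  | none => exact absurd (hd ▸ hd0) hn
  | some m =>
    have hdx : d0 = x := by
      by_contra hne
      obtain ⟨z, hzD, hz⟩ := hconv ({some m}ᶜ) (flatTop_compl_some_open m)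
        (fun hx => hne (hd.trans (Set.mem_singleton_iff.mp hx).symm))
      have hzd : z = d0 := flatTop_dir_sing hD hn z hzD d0 hd0
      exact hz (by rw [hzd, hd]; rfl)
    rw [← hd, hdx]
    exact @sOrd_refl _ flatTop x

theorem flatTop_dirOpen_none : @DirOpen _ flatTop {(none : Option ℕ)} := by
  intro D x hD hconv hx
  rw [Set.mem_singleton_iff] at hx
  subst hx
  by_cases hn : none ∈ D
  · exact ⟨none, hn, rfl⟩
  obtain ⟨d0, hd0⟩ := hD.1
  cases hd : d0 with
  | none => exact absurd (hd ▸ hd0) hn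
  | some m =>
    obtain ⟨z, hzD, hz⟩ := hconv ({some m}ᶜ) (flatTop_compl_some_open m) (by simp)
    have hzd : z = d0 := flatTop_dir_sing hD hn z hzD d0 hd0
    exact absurd (by rw [hzd, hd]; rfl) hz

theorem flatTop_not_open_none :
    ¬ flatTop.IsOpen ({(none : Option ℕ)} : Set (Option ℕ)) := by
  intro h
  rcases flatTop_open_struct h with h0 | ⟨-, hf⟩
  · exact absurd h0 (by simp)
  · have he : {n : ℕ | some n ∉ ({(none : Option ℕ)} : Set (Option ℕ))} = Set.univ := by
      ext n; simp
    rw [he] at hf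
    exact Set.infinite_univ hf

end Flat

/-- the flat domain `ℕ⊤` (modelled as `Option ℕ`, with `x ≤ y` iff
`x = y` or `y = ⊤ = none`) with the upper topology (generated by the complements of
the sets `↓a`) has every element d-compact, yet it is not a directed space:
`{⊤}` is directed-open but not open. -/
theorem flat_domain_upper_topology_not_directed :
    letI t : TopologicalSpace (Option ℕ) :=
      TopologicalSpace.generateFrom
        {S : Set (Option ℕ) | ∃ a : Option ℕ, S = {z : Option ℕ | z = a ∨ a = none}ᶜ}
    (∀ x : Option ℕ, WayBelow x x) ∧
      DirOpen {(none : Option ℕ)} ∧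
      ¬ IsOpen ({(none : Option ℕ)} : Set (Option ℕ)) ∧
      ¬ IsDirectedSpace (Option ℕ) := by
  refine ⟨flatTop_wayBelow, flatTop_dirOpen_none, flatTop_not_open_none, ?_⟩
  rintro ⟨-, h⟩
  exact flatTop_not_open_none (h _ flatTop_dirOpen_none)
end
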